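/- Let T = Trias₃¹² be the 3-dimensional real algebra with basis e₁, e₂, e₃ and products e₁⊣e₁ = e₃, e₁⊣e₂ = e₃, e₂⊣e₁ = e₃; e₁⊢e₂ = e₃, e₂⊢e₁ = e₃, e₂⊢e₂ = e₃; e₂⊥e₁ = e₃, e₂⊥e₂ = e₃ (all other products of basis vectors are zero). Then a linear map d : T → T is a derivation of T if and only if there exist α, β, γ ∈ ℝ with d(e₁) = α e₁ + β e₃, d(e₂) = α e₂ + γ e₃, d(e₃) = 2α e₃; in particular the space Der(T) of derivations has dimension 3. -/
import Mathlib


/-- The space of derivations of an algebra with three bilinear products `l`, `r`, `m`: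
linear maps satisfying the Leibniz rule for each of the three products. -/
def DerSubmodule {E : Type*} [AddCommGroup E] [Module ℝ E]
    (l r m : E →ₗ[ℝ] E →ₗ[ℝ] E) : Submodule ℝ (E →ₗ[ℝ] E) where
  carrier := {d | ∀ x y : E,
    d (l x y) = l (d x) y + l x (d y) ∧
    d (r x y) = r (d x) y + r x (d y) ∧
    d (m x y) = m (d x) y + m x (d y)}
  add_mem' := by
    intro a b ha hb x y
    obtain ⟨h1, h2, h3⟩ := ha x y
    obtain ⟨g1, g2, g3⟩ := hb x y
    refine ⟨?_, ?_, ?_⟩ <;>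
      simp only [LinearMap.add_apply, h1, h2, h3, g1, g2, g3, map_add] <;> abel
  zero_mem' := by
    intro x y
    simp
  smul_mem' := by
    intro c a ha x y
    obtain ⟨h1, h2, h3⟩ := ha x y
    refine ⟨?_, ?_, ?_⟩ <;>
      simp only [LinearMap.smul_apply, h1, h2, h3, map_smul, smul_add]

/-- The centroid of an algebra with three bilinear products `l`, `r`, `m`:
linear maps ψ with ψ(x•y) = ψ(x)•y = x•ψ(y) for each of the three products. -/
def CentroidSubmodule {E : Type*} [AddCommGroup E] [Module ℝ E]
    (l r m : E →ₗ[ℝ] E →ₗ[ℝ] E) : Submodule ℝ (E →ₗ[ℝ] E) where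
  carrier := {ψ | ∀ x y : E,
    (ψ (l x y) = l (ψ x) y ∧ ψ (l x y) = l x (ψ y)) ∧
    (ψ (r x y) = r (ψ x) y ∧ ψ (r x y) = r x (ψ y)) ∧
    (ψ (m x y) = m (ψ x) y ∧ ψ (m x y) = m x (ψ y))}
  add_mem' := by
    intro a b ha hb x y
    obtain ⟨⟨h1, h1'⟩, ⟨h2, h2'⟩, ⟨h3, h3'⟩⟩ := ha x y
    obtain ⟨⟨g1, g1'⟩, ⟨g2, g2'⟩, ⟨g3, g3'⟩⟩ := hb x y
    refine ⟨⟨?_, ?_⟩, ⟨?_, ?_⟩, ⟨?_, ?_⟩⟩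
    · simp only [LinearMap.add_apply, map_add, h1, g1]
    · simp only [LinearMap.add_apply, map_add, h1', g1']
    · simp only [LinearMap.add_apply, map_add, h2, g2]
    · simp only [LinearMap.add_apply, map_add, h2', g2']
    · simp only [LinearMap.add_apply, map_add, h3, g3]
    · simp only [LinearMap.add_apply, map_add, h3', g3']
  zero_mem' := by
    intro x y
    simp
  smul_mem' := by
    intro c a ha x y
    obtain ⟨⟨h1, h1'⟩, ⟨h2, h2'⟩, ⟨h3, h3'⟩⟩ := ha x y
    refine ⟨⟨?_, ?_⟩, ⟨?_, ?_⟩, ⟨?_, ?_⟩⟩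
    · simp only [LinearMap.smul_apply, map_smul, h1]
    · simp only [LinearMap.smul_apply, map_smul, h1']
    · simp only [LinearMap.smul_apply, map_smul, h2]
    · simp only [LinearMap.smul_apply, map_smul, h2']
    · simp only [LinearMap.smul_apply, map_smul, h3]
    · simp only [LinearMap.smul_apply, map_smul, h3']

/-- The first basis vector of ℝ³. -/
def e1 : Fin 3 → ℝ := ![1, 0, 0]

/-- The second basis vector of ℝ³. -/
def e2 : Fin 3 → ℝ := ![0, 1, 0]

/-- The third basis vector of ℝ³. -/
def e3 : Fin 3 → ℝ := ![0, 0, 1]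


/-- Every vector in ℝ³ is a combination of e1, e2, e3. -/
lemma span3 (x : Fin 3 → ℝ) : x = x 0 • e1 + x 1 • e2 + x 2 • e3 := by
  funext i
  fin_cases i <;> simp [e1, e2, e3]

@[simp] lemma e1_0 : e1 0 = 1 := rfl
@[simp] lemma e1_1 : e1 1 = 0 := rfl
@[simp] lemma e1_2 : e1 2 = 0 := rfl
@[simp] lemma e2_0 : e2 0 = 0 := rfl
@[simp] lemma e2_1 : e2 1 = 1 := rfl
@[simp] lemma e2_2 : e2 2 = 0 := rfl
@[simp] lemma e3_0 : e3 0 = 0 := rfl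
@[simp] lemma e3_1 : e3 1 = 0 := rfl
@[simp] lemma e3_2 : e3 2 = 1 := rfl

/-- The explicit derivation with parameters α, β, γ. -/
def mkD (a b c : ℝ) : (Fin 3 → ℝ) →ₗ[ℝ] (Fin 3 → ℝ) where
  toFun x := ![a * x 0, a * x 1, b * x 0 + c * x 1 + 2 * a * x 2]
  map_add' x y := by funext i; fin_cases i <;> simp <;> ring
  map_smul' t x := by funext i; fin_cases i <;> simp [smul_eq_mul] <;> ring

lemma mkD_e1 (a b c : ℝ) : mkD a b c e1 = a • e1 + b • e3 := by
  funext i; fin_cases i <;> simp [mkD, e1, e2, e3]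

lemma mkD_e2 (a b c : ℝ) : mkD a b c e2 = a • e2 + c • e3 := by
  funext i; fin_cases i <;> simp [mkD, e1, e2, e3]

lemma mkD_e3 (a b c : ℝ) : mkD a b c e3 = (2 * a) • e3 := by
  funext i; fin_cases i <;> simp [mkD, e1, e2, e3]

/-- Derivations of the 3-dimensional trialgebra Trias₃¹² are exactly the maps
d(e₁) = α e₁ + β e₃, d(e₂) = α e₂ + γ e₃, d(e₃) = 2α e₃; in particular Der(T) has
dimension 3. -/
theorem statement18 (l r m : (Fin 3 → ℝ) →ₗ[ℝ] (Fin 3 → ℝ) →ₗ[ℝ] (Fin 3 → ℝ))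
    (hl11 : l e1 e1 = e3)
    (hl12 : l e1 e2 = e3)
    (hl13 : l e1 e3 = 0)
    (hl21 : l e2 e1 = e3)
    (hl22 : l e2 e2 = 0)
    (hl23 : l e2 e3 = 0)
    (hl31 : l e3 e1 = 0)
    (hl32 : l e3 e2 = 0)
    (hl33 : l e3 e3 = 0)
    (hr11 : r e1 e1 = 0)
    (hr12 : r e1 e2 = e3)
    (hr13 : r e1 e3 = 0)
    (hr21 : r e2 e1 = e3)
    (hr22 : r e2 e2 = e3)
    (hr23 : r e2 e3 = 0)
    (hr31 : r e3 e1 = 0)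
    (hr32 : r e3 e2 = 0)
    (hr33 : r e3 e3 = 0)
    (hm11 : m e1 e1 = 0)
    (hm12 : m e1 e2 = 0)
    (hm13 : m e1 e3 = 0)
    (hm21 : m e2 e1 = e3)
    (hm22 : m e2 e2 = e3)
    (hm23 : m e2 e3 = 0)
    (hm31 : m e3 e1 = 0)
    (hm32 : m e3 e2 = 0)
    (hm33 : m e3 e3 = 0) :
    (∀ d : (Fin 3 → ℝ) →ₗ[ℝ] (Fin 3 → ℝ),
      d ∈ DerSubmodule l r m ↔ ∃ α β γ : ℝ,
        d e1 = α • e1 + β • e3 ∧ d e2 = α • e2 + γ • e3 ∧ d e3 = (2 * α) • e3) ∧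
    Module.finrank ℝ (DerSubmodule l r m) = 3 := by
  have key : ∀ d : (Fin 3 → ℝ) →ₗ[ℝ] (Fin 3 → ℝ),
      d ∈ DerSubmodule l r m ↔ ∃ α β γ : ℝ,
        d e1 = α • e1 + β • e3 ∧ d e2 = α • e2 + γ • e3 ∧ d e3 = (2 * α) • e3 := by
    intro d
    constructor
    · intro hd
      have H1 := (hd e1 e1).1
      rw [hl11, span3 (d e1)] at H1
      simp only [map_add, map_smul, LinearMap.add_apply, LinearMap.smul_apply,
        hl11, hl21, hl31, hl12, hl13, smul_zero, add_zero, zero_add] at H1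
      have H2 := (hd e1 e1).2.1
      rw [hr11, span3 (d e1)] at H2
      simp only [map_zero, map_add, map_smul, LinearMap.add_apply, LinearMap.smul_apply,
        hr11, hr21, hr31, hr12, hr13, smul_zero, add_zero, zero_add] at H2
      have H3 := (hd e2 e2).1
      rw [hl22, span3 (d e2)] at H3
      simp only [map_zero, map_add, map_smul, LinearMap.add_apply, LinearMap.smul_apply,
        hl12, hl22, hl32, hl21, hl23, smul_zero, add_zero, zero_add] at H3
      have H4 := (hd e1 e2).1
      rw [hl12, span3 (d e1), span3 (d e2)] at H4
      simp only [map_add, map_smul, LinearMap.add_apply, LinearMap.smul_apply,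
        hl11, hl12, hl13, hl22, hl32, smul_zero, add_zero, zero_add] at H4
      have hA0 := congrFun H1 0
      have hA1 := congrFun H1 1
      have hA2 := congrFun H1 2
      have hB := congrFun H2 2
      have hC := congrFun H3 2
      have hD := congrFun H4 2
      simp only [Pi.add_apply, Pi.smul_apply, Pi.zero_apply, e3_0, e3_1, e3_2,
        smul_eq_mul, mul_zero, mul_one, add_zero, zero_add] at hA0 hA1 hA2 hB hC hD
      have hb : d e1 1 = 0 := by linarith
      have hp : d e2 0 = 0 := by linarith
      have hq : d e2 1 = d e1 0 := by linarith
      have hw : d e3 2 = 2 * d e1 0 := by linarith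
      refine ⟨d e1 0, d e1 2, d e2 2, ?_, ?_, ?_⟩
      · conv_lhs => rw [span3 (d e1)]
        rw [hb]; simp
      · conv_lhs => rw [span3 (d e2)]
        rw [hp, hq]; simp
      · conv_lhs => rw [span3 (d e3)]
        rw [hA0, hA1, hw]; simp
    · rintro ⟨α, β, γ, h1, h2, h3⟩
      intro x y
      rw [span3 x, span3 y]
      refine ⟨?_, ?_, ?_⟩ <;>
        · simp only [map_add, map_smul, LinearMap.add_apply, LinearMap.smul_apply,
            h1, h2, h3,
            hl11, hl12, hl13, hl21, hl22, hl23, hl31, hl32, hl33,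
            hr11, hr12, hr13, hr21, hr22, hr23, hr31, hr32, hr33,
            hm11, hm12, hm13, hm21, hm22, hm23, hm31, hm32, hm33,
            smul_zero, add_zero, zero_add, smul_add, map_zero]
          module
  refine ⟨key, ?_⟩
  -- build a linear equivalence Der ≃ ℝ³
  let φ : (DerSubmodule l r m) →ₗ[ℝ] (Fin 3 → ℝ) :=
    { toFun := fun d => ![d.1 e1 0, d.1 e1 2, d.1 e2 2]
      map_add' := by
        intro a b
        funext i
        fin_cases i <;> simp
      map_smul' := by
        intro t a
        funext i
        fin_cases i <;> simp }
  have hinj : Function.Injective φ := by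
    rw [injective_iff_map_eq_zero]
    intro d hd0
    obtain ⟨α, β, γ, h1, h2, h3⟩ := (key d.1).1 d.2
    have e0 : d.1 e1 0 = 0 := by
      have := congrFun hd0 0; simpa [φ] using this
    have e1' : d.1 e1 2 = 0 := by
      have := congrFun hd0 1; simpa [φ] using this
    have e2' : d.1 e2 2 = 0 := by
      have := congrFun hd0 2; simpa [φ] using this
    have hα : α = 0 := by
      have h := congrFun h1 0
      simp only [Pi.add_apply, Pi.smul_apply, e1_0, e3_0, smul_eq_mul, mul_one,
        mul_zero, add_zero, e0] at h
      linarith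
    have hβ : β = 0 := by
      have h := congrFun h1 2
      simp only [Pi.add_apply, Pi.smul_apply, e1_2, e3_2, smul_eq_mul, mul_one,
        mul_zero, zero_add, e1'] at h
      linarith
    have hγ : γ = 0 := by
      have h := congrFun h2 2
      simp only [Pi.add_apply, Pi.smul_apply, e2_2, e3_2, smul_eq_mul, mul_one,
        mul_zero, zero_add, e2'] at h
      linarith
    subst hα hβ hγ
    simp only [zero_smul, add_zero, mul_zero] at h1 h2 h3
    apply Subtype.ext
    apply LinearMap.ext
    intro x
    show d.1 x = (0 : (Fin 3 → ℝ) →ₗ[ℝ] (Fin 3 → ℝ)) x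
    rw [span3 x]
    simp [map_add, map_smul, h1, h2, h3]
  have hsurj : Function.Surjective φ := by
    intro v
    refine ⟨⟨mkD (v 0) (v 1) (v 2), ?_⟩, ?_⟩
    · exact (key _).2 ⟨v 0, v 1, v 2, mkD_e1 _ _ _, mkD_e2 _ _ _, mkD_e3 _ _ _⟩
    · funext i
      fin_cases i <;> simp [φ, mkD, e1, e2]
  have eqv : (DerSubmodule l r m) ≃ₗ[ℝ] (Fin 3 → ℝ) :=
    LinearEquiv.ofBijective φ ⟨hinj, hsurj⟩
  rw [eqv.finrank_eq]
  simp
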